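/- If p is an odd prime with L_p(n) ≥ 0 for all n ≥ 1, then p ≡ 3 (mod 4). -/

import Mathlib

/-!
Suppose `p ≡ 1 (mod 4)`. Then `(-1/p) = 1`, so `(m/p) = ((p - m)/p)` and the vanishing of
`∑_{m<p} (m/p)` splits into two equal halves: with `h = (p - 1)/2`, `∑_{m ≤ h} (m/p) = 0`.
Since `h + 1 = p - h`, the symbols of `h` and `h + 1` share a value `ε = ±1`, whence
`L_p(h - 1) = -ε` and `L_p(h + 1) = ε`; one of them is `-1`. (Below `p`, `λ_p` is the
Legendre symbol.)
-/

open Finset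

theorem ZMod.sum_univ_eq_sum_range {M : Type*} [AddCommMonoid M] (n : ℕ) [NeZero n]
    (g : ZMod n → M) : ∑ a, g a = ∑ m ∈ range n, g m :=
  sum_nbij' ZMod.val Nat.cast (fun a _ => mem_range.2 a.val_lt) (fun _ _ => mem_univ _)
    (fun a _ => ZMod.natCast_zmod_val a) (fun _ hm => ZMod.val_cast_of_lt (mem_range.1 hm))
    (fun a _ => by rw [ZMod.natCast_zmod_val])

namespace legendreSym

variable (p : ℕ) [Fact p.Prime]

theorem sum_Ico_eq_zero (hp : p ≠ 2) : ∑ m ∈ Ico 1 p, legendreSym p m = 0 := by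
  have hsum := quadraticChar_sum_zero (F := ZMod p) (by rwa [ZMod.ringChar_zmod_n])
  rw [ZMod.sum_univ_eq_sum_range, range_eq_Ico,
    sum_eq_sum_Ico_succ_bot (Fact.out : p.Prime).pos] at hsum
  simpa [legendreSym] using hsum

variable {p}

theorem neg_of_mod_four_eq_one (hp : p % 4 = 1) (a : ℤ) :
    legendreSym p (-a) = legendreSym p a := by
  rw [neg_eq_neg_one_mul, legendreSym.mul, legendreSym.at_neg_one (by omega),
    ZMod.χ₄_nat_one_mod_four hp, one_mul]

theorem natCast_sub_of_mod_four_eq_one (hp : p % 4 = 1) {m : ℕ} (hm : m ≤ p) :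
    legendreSym p ((p - m : ℕ) : ℤ) = legendreSym p m := by
  rw [← neg_of_mod_four_eq_one hp (m : ℤ)]
  simp [legendreSym, Nat.cast_sub hm]

theorem sum_Icc_half_eq_zero (hp : p % 4 = 1) :
    ∑ m ∈ Icc 1 (p / 2), legendreSym p m = 0 := by
  have hsplit := sum_Ico_consecutive (fun m : ℕ => legendreSym p m)
    (show 1 ≤ p / 2 + 1 by omega) (show p / 2 + 1 ≤ p by omega)
  have hreflect :=
    sum_Ico_reflect (fun m : ℕ => legendreSym p m) (p / 2 + 1) (m := p) (n := p) p.le_succ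
  rw [show p + 1 - p = 1 by omega, show p + 1 - (p / 2 + 1) = p / 2 + 1 by omega] at hreflect
  rw [sum_congr rfl fun m hm => natCast_sub_of_mod_four_eq_one hp (mem_Ico.1 hm).2.le]
    at hreflect
  rw [sum_Ico_eq_zero p (by omega), hreflect, Ico_add_one_right_eq_Icc] at hsplit
  omega

theorem exists_sum_Icc_eq_neg_one (hp : p % 4 = 1) :
    ∃ n, 1 ≤ n ∧ n < p ∧ ∑ m ∈ Icc 1 n, legendreSym p m = -1 := by
  have hp5 : 5 ≤ p := by
    have := (Fact.out : p.Prime).two_le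
    omega
  have hhalf := sum_Icc_half_eq_zero hp
  have hmiddle : legendreSym p ((p / 2 + 1 : ℕ) : ℤ) = legendreSym p (p / 2 : ℕ) := by
    rw [show p / 2 + 1 = p - p / 2 by omega,
      natCast_sub_of_mod_four_eq_one hp (Nat.div_le_self p 2)]
  have hne : (((p / 2 : ℕ) : ℤ) : ZMod p) ≠ 0 := by
    rw [Int.cast_natCast, Ne, ZMod.natCast_eq_zero_iff]
    exact Nat.not_dvd_of_pos_of_lt (by omega) (by omega)
  rcases eq_one_or_neg_one p hne with hε | hε
  · refine ⟨p / 2 - 1, by omega, by omega, ?_⟩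
    have := sum_Icc_succ_top (show 1 ≤ p / 2 - 1 + 1 by omega) fun m : ℕ => legendreSym p m
    rw [Nat.sub_add_cancel (by omega), hhalf, hε] at this
    omega
  · refine ⟨p / 2 + 1, by omega, by omega, ?_⟩
    rw [sum_Icc_succ_top (by omega), hhalf, hmiddle, hε, zero_add]

end legendreSym

theorem eq_legendreSym_of_not_dvd {p : ℕ} [Fact p.Prime] {f : ℕ → ℤ} (hf1 : f 1 = 1)
    (hfmul : ∀ m n, f (m * n) = f m * f n)
    (hfq : ∀ q : ℕ, q.Prime → q ≠ p → f q = legendreSym p q) {m : ℕ} (hm : ¬ p ∣ m) :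
    f m = legendreSym p m := by
  induction m using Nat.recOnMul with
  | zero => exact absurd (dvd_zero p) hm
  | one => rw [hf1, Nat.cast_one, legendreSym.at_one]
  | prime q hq => exact hfq q hq fun hqp => hm (hqp ▸ dvd_rfl)
  | mul a b ha hb =>
    rw [hfmul, ha fun h => hm (h.mul_right b), hb fun h => hm (h.mul_left a), Nat.cast_mul,
      legendreSym.mul]

theorem stmt_16_general (p : ℕ) [Fact p.Prime] (hodd : p ≠ 2)
    (f : ℕ → ℤ) (hf1 : f 1 = 1) (hfmul : ∀ m n, f (m * n) = f m * f n)
    (hfq : ∀ q : ℕ, q.Prime → q ≠ p → f q = legendreSym p q)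
    (hpos : ∀ n : ℕ, 1 ≤ n → 0 ≤ ∑ m ∈ Finset.Icc 1 n, f m) :
    p % 4 = 3 := by
  have hp_odd : p % 2 = 1 := ((Fact.out : p.Prime).eq_two_or_odd).resolve_left hodd
  refine (show p % 4 = 1 ∨ p % 4 = 3 by omega).resolve_left fun hp => ?_
  obtain ⟨n, hn1, hnp, hsum⟩ := legendreSym.exists_sum_Icc_eq_neg_one hp
  have hL := hpos n hn1
  rw [sum_congr rfl fun m hm => eq_legendreSym_of_not_dvd hf1 hfmul hfq
    (Nat.not_dvd_of_pos_of_lt (mem_Icc.1 hm).1 ((mem_Icc.1 hm).2.trans_lt hnp)), hsum] at hL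
  omega

/-- If `L_p(n) ≥ 0` for all `n ≥ 1`, then `p ≡ 3 (mod 4)`. -/
theorem stmt_16 (p : ℕ) [Fact p.Prime] (hodd : p ≠ 2)
    (f : ℕ → ℤ) (hf1 : f 1 = 1) (hfmul : ∀ m n, f (m * n) = f m * f n)
    (hfp : f p = 1) (hfq : ∀ q : ℕ, q.Prime → q ≠ p → f q = legendreSym p q)
    (hpos : ∀ n : ℕ, 1 ≤ n → 0 ≤ ∑ m ∈ Finset.Icc 1 n, f m) :
    p % 4 = 3 :=
  stmt_16_general p hodd f hf1 hfmul hfq hpos
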